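/- arXiv:2308.13815 — 2 statements merged into one kernel-verified Lean document; each statement's English description precedes it below -/
import Mathlib

section
/- If MMD(H, p, q) = 0 for a universal RKHS H on a compact set Ω, then p = q. Conversely if p = q then MMD(H, p, q) = 0. -/
/-! The MMD is the supremum over the unit ball of the real functional
`D g = ∫ ⟪g, φ⟫ ∂p - ∫ ⟪g, φ⟫ ∂q`, i.e. its operator norm. Writing `Φ : H →L[ℝ] C(Ω, ℝ)` for
`g ↦ ⟪g, φ ·⟫`, we have `D = (∫ · ∂p - ∫ · ∂q) ∘ Φ`. Universality says `Φ` has dense range, so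
`D = 0` iff `p` and `q` integrate every continuous function alike, which characterizes a finite
Borel measure on a compact metric space. -/

open MeasureTheory Metric

namespace ContinuousLinearMap

theorem sSup_image_unitClosedBall_eq_norm {E : Type*} [NormedAddCommGroup E]
    [NormedSpace ℝ E] (L : E →L[ℝ] ℝ) : sSup (L '' closedBall 0 1) = ‖L‖ := by
  refine csSup_eq_of_forall_le_of_forall_lt_exists_gt
    ((nonempty_closedBall.mpr zero_le_one).image _) ?_ fun r hr => ?_
  · rintro - ⟨x, hx, rfl⟩
    exact (le_abs_self _).trans (L.unit_le_opNorm x (mem_closedBall_zero_iff.1 hx))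
  · obtain ⟨x, hx, hrx⟩ := L.exists_lt_apply_of_lt_opNorm hr
    have hmem : ∀ y : E, ‖y‖ ≤ 1 → L y ∈ L '' closedBall 0 1 :=
      fun y hy => ⟨y, mem_closedBall_zero_iff.2 hy, rfl⟩
    rcases le_total 0 (L x) with h | h
    · exact ⟨L x, hmem x hx.le, hrx.trans_eq (Real.norm_of_nonneg h)⟩
    · exact ⟨L (-x), hmem (-x) (by simpa using hx.le),
        by simpa [Real.norm_of_nonpos h] using hrx⟩

theorem comp_eq_zero_iff_of_denseRange {R E F G : Type*} [Semiring R]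
    [TopologicalSpace E] [AddCommMonoid E] [Module R E]
    [TopologicalSpace F] [AddCommMonoid F] [Module R F]
    [TopologicalSpace G] [AddCommMonoid G] [Module R G] [T2Space G]
    {Φ : E →L[R] F} (hΦ : DenseRange Φ) {L : F →L[R] G} : L.comp Φ = 0 ↔ L = 0 := by
  refine ⟨fun h => ?_, fun h => by rw [h, zero_comp]⟩
  ext y
  exact congrFun (hΦ.equalizer L.continuous continuous_const (funext fun x => congr($h x))) y

end ContinuousLinearMap

namespace ContinuousMap

variable {X H : Type*} [TopologicalSpace X] [CompactSpace X]
  [SeminormedAddCommGroup H] [InnerProductSpace ℝ H]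

noncomputable def innerLeftCLM (φ : C(X, H)) : H →L[ℝ] C(X, ℝ) :=
  LinearMap.mkContinuous
    { toFun := fun g => ⟨fun x => inner ℝ g (φ x), continuous_const.inner φ.continuous⟩
      map_add' := fun g h => by ext; simp [inner_add_left]
      map_smul' := fun c g => by ext; simp [real_inner_smul_left] }
    ‖φ‖ fun g => (norm_le _ (by positivity)).2 fun x =>
      calc ‖inner ℝ g (φ x)‖ ≤ ‖g‖ * ‖φ x‖ := norm_inner_le_norm g (φ x)
        _ ≤ ‖φ‖ * ‖g‖ := by rw [mul_comm]; gcongr; exact φ.norm_coe_le_norm x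

@[simp]
theorem innerLeftCLM_apply (φ : C(X, H)) (g : H) (x : X) :
    innerLeftCLM φ g x = inner ℝ g (φ x) := rfl

variable [MeasurableSpace X] [BorelSpace X]

noncomputable def integralCLM (μ : Measure X) [IsFiniteMeasure μ] : C(X, ℝ) →L[ℝ] ℝ :=
  L1.integralCLM.comp (toLp 1 μ ℝ)

@[simp]
theorem integralCLM_apply (μ : Measure X) [IsFiniteMeasure μ] (f : C(X, ℝ)) :
    integralCLM μ f = ∫ x, f x ∂μ := by
  rw [integralCLM, ContinuousLinearMap.comp_apply, ← L1.integral_eq, L1.integral_eq_integral]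
  exact integral_congr_ae (coeFn_toLp μ f)

theorem integralCLM_inj [HasOuterApproxClosed X] {μ ν : Measure X} [IsFiniteMeasure μ]
    [IsFiniteMeasure ν] : integralCLM μ = integralCLM ν ↔ μ = ν := by
  refine ⟨fun h => ext_of_forall_integral_eq_of_IsFiniteMeasure fun f => ?_,
    fun h => by subst h; rfl⟩
  simpa using congr($h f.toContinuousMap)

end ContinuousMap

/-- The RKHS is given by a feature map `φ` into an inner product space: its functions are
`x ↦ ⟪g, φ x⟫`, with `‖g‖` as RKHS norm. -/
theorem mmd_eq_zero_iff {d : ℕ} (Ω : Set (EuclideanSpace ℝ (Fin d))) (hΩ : IsCompact Ω)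
    {H : Type*} [NormedAddCommGroup H] [InnerProductSpace ℝ H]
    (φ : Ω → H) (hφ : Continuous φ)
    (huniv : DenseRange (fun g : H =>
      (⟨fun x => (inner ℝ g (φ x) : ℝ), (continuous_const.inner hφ)⟩ : C(Ω, ℝ))))
    (p q : Measure Ω) [IsProbabilityMeasure p] [IsProbabilityMeasure q]
    (MMD : ℝ)
    (hMMD : MMD = sSup {r : ℝ | ∃ g : H, ‖g‖ ≤ 1 ∧
      r = (∫ x, (inner ℝ g (φ x) : ℝ) ∂p) - ∫ x, (inner ℝ g (φ x) : ℝ) ∂q}) :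
    MMD = 0 ↔ p = q := by
  have : CompactSpace Ω := isCompact_iff_compactSpace.mp hΩ
  let Φ := ContinuousMap.innerLeftCLM (⟨φ, hφ⟩ : C(Ω, H))
  have hΦ : DenseRange Φ := huniv
  have hMMD_norm :
      MMD = ‖(ContinuousMap.integralCLM p - ContinuousMap.integralCLM q).comp Φ‖ := by
    rw [hMMD, ← ContinuousLinearMap.sSup_image_unitClosedBall_eq_norm]
    congr 1
    ext r
    simp [Φ, eq_comm]
  rw [hMMD_norm, norm_eq_zero, ContinuousLinearMap.comp_eq_zero_iff_of_denseRange hΦ, sub_eq_zero,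
    ContinuousMap.integralCLM_inj]
end

section
/- With OT_λ and OT defined as above and assuming minimizers T_λ* of OT_λ exist and a minimizer of OT exists and is finite, the symmetric MMD penalty of the minimizers satisfies limsup_{λ→∞} λ·[MMD((T_λ*)_♯p, q) + MMD(p, ((T_λ*)^{-1})_♯q)] ≤ OT(p,q) < ∞; in particular MMD((T_λ*)_♯ p, q) → 0 as λ → ∞. -/
/-! The relaxed minimizer is compared with the exact transport map `T₀`: since `T₀` pushes `p`
to `q` and its inverse pushes `q` back to `p`, its MMD penalty vanishes, so the optimality
of `T lam` and the nonnegativity of the transport costs give `lam · d_MMD(T lam) ≤ OT(p, q)`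
for every `lam > 0`. This bound yields the limsup estimate, and `MMD ≤ OT(p, q) / lam → 0`. -/

open MeasureTheory Filter

/-- A diffeomorphism of a set `Ω`: a differentiable bijection of `Ω` with
differentiable (measurable) inverse. -/
def IsDiffeoOn {d : ℕ} (Ω : Set (EuclideanSpace ℝ (Fin d)))
    (T S : EuclideanSpace ℝ (Fin d) → EuclideanSpace ℝ (Fin d)) : Prop :=
  Set.BijOn T Ω Ω ∧ Set.InvOn S T Ω Ω ∧ Set.MapsTo S Ω Ω ∧
    DifferentiableOn ℝ T Ω ∧ DifferentiableOn ℝ S Ω ∧ Measurable T ∧ Measurable S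

theorem MeasureTheory.Measure.map_map_eq_self_of_leftInvOn {α β : Type*}
    [MeasurableSpace α] [MeasurableSpace β] {μ : Measure α} {T : α → β} {S : β → α}
    {s : Set α} (hT : Measurable T) (hS : Measurable S) (hST : Set.LeftInvOn S T s)
    (hs : μ sᶜ = 0) : (μ.map T).map S = μ := by
  have hae : S ∘ T =ᵐ[μ] id := by
    filter_upwards [measure_eq_zero_iff_ae_notMem.mp hs] with x hx
    exact hST (by simpa using hx)
  rw [Measure.map_map hS hT, Measure.map_congr hae, Measure.map_id]

theorem limsup_le_of_eventually_nonneg_of_eventually_le {ι : Type*} {l : Filter ι} [l.NeBot]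
    {f : ι → ℝ} {C : ℝ} (hf₀ : ∀ᶠ i in l, 0 ≤ f i) (hfC : ∀ᶠ i in l, f i ≤ C) :
    limsup f l ≤ C :=
  limsup_le_of_le (isCoboundedUnder_le_of_eventually_le l hf₀) hfC

theorem tendsto_zero_of_eventually_nonneg_of_mul_le {f : ℝ → ℝ} {C : ℝ}
    (hf₀ : ∀ᶠ x in atTop, 0 ≤ f x) (hfC : ∀ᶠ x in atTop, x * f x ≤ C) :
    Tendsto f atTop (nhds 0) := by
  have hC_div : Tendsto (fun x : ℝ => C / x) atTop (nhds 0) :=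
    tendsto_const_nhds.div_atTop tendsto_id
  refine tendsto_of_tendsto_of_tendsto_of_le_of_le' tendsto_const_nhds hC_div hf₀ ?_
  filter_upwards [hfC, eventually_gt_atTop 0] with x hx hx₀
  rw [le_div_iff₀ hx₀]
  linarith

theorem penalty_limsup_le_OT_general {d : ℕ} (Ω : Set (EuclideanSpace ℝ (Fin d)))
    (c : EuclideanSpace ℝ (Fin d) → EuclideanSpace ℝ (Fin d) → ℝ)
    (hcnonneg : ∀ x y, 0 ≤ c x y)
    (p q : Measure (EuclideanSpace ℝ (Fin d)))
    (hpΩ : p Ωᶜ = 0)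
    (MMD : Measure (EuclideanSpace ℝ (Fin d)) → Measure (EuclideanSpace ℝ (Fin d)) → ℝ)
    (hMMDnonneg : ∀ μ ν, 0 ≤ MMD μ ν)
    (hMMDrefl : ∀ μ ν, μ = ν → MMD μ ν = 0)
    (T S : ℝ → EuclideanSpace ℝ (Fin d) → EuclideanSpace ℝ (Fin d))
    (hTmin : ∀ lam > (0:ℝ), ∀ T' S', IsDiffeoOn Ω T' S' →
      (∫ x, c x (T lam x) ∂p) + (∫ z, c (S lam z) z ∂q)
          + lam * (MMD (p.map (T lam)) q + MMD p (q.map (S lam))) ≤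
        (∫ x, c x (T' x) ∂p) + (∫ z, c (S' z) z ∂q)
          + lam * (MMD (p.map T') q + MMD p (q.map S')))
    (T₀ S₀ : EuclideanSpace ℝ (Fin d) → EuclideanSpace ℝ (Fin d))
    (hT₀ : IsDiffeoOn Ω T₀ S₀) (hT₀push : p.map T₀ = q)
    (OTval : ℝ)
    (hOTval : OTval = (∫ x, c x (T₀ x) ∂p) + (∫ z, c (S₀ z) z ∂q)) :
    limsup (fun lam : ℝ =>
        lam * (MMD (p.map (T lam)) q + MMD p (q.map (S lam)))) atTop ≤ OTval ∧
      Tendsto (fun lam : ℝ => MMD (p.map (T lam)) q) atTop (nhds 0) := by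
  obtain ⟨-, ⟨hS₀T₀, -⟩, -, -, -, hT₀meas, hS₀meas⟩ := id hT₀
  have hS₀push : q.map S₀ = p := by
    rw [← hT₀push]
    exact Measure.map_map_eq_self_of_leftInvOn hT₀meas hS₀meas hS₀T₀ hpΩ
  have hpenalty_le : ∀ᶠ lam in atTop,
      lam * (MMD (p.map (T lam)) q + MMD p (q.map (S lam))) ≤ OTval := by
    filter_upwards [eventually_gt_atTop 0] with lam hlam
    have hcompare := hTmin lam hlam T₀ S₀ hT₀
    rw [hMMDrefl _ _ hT₀push, hMMDrefl _ _ hS₀push.symm, add_zero, mul_zero, add_zero]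
      at hcompare
    have hcostT : 0 ≤ ∫ x, c x (T lam x) ∂p := integral_nonneg fun x => hcnonneg _ _
    have hcostS : 0 ≤ ∫ z, c (S lam z) z ∂q := integral_nonneg fun z => hcnonneg _ _
    linarith
  have hpenalty_nonneg : ∀ᶠ lam in atTop,
      0 ≤ lam * (MMD (p.map (T lam)) q + MMD p (q.map (S lam))) := by
    filter_upwards [eventually_ge_atTop 0] with lam hlam
    exact mul_nonneg hlam (add_nonneg (hMMDnonneg _ _) (hMMDnonneg _ _))
  refine ⟨limsup_le_of_eventually_nonneg_of_eventually_le hpenalty_nonneg hpenalty_le,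
    tendsto_zero_of_eventually_nonneg_of_mul_le (C := OTval)
      (.of_forall fun _ => hMMDnonneg _ _) ?_⟩
  filter_upwards [hpenalty_le, eventually_ge_atTop 0] with lam hle hlam
  exact (mul_le_mul_of_nonneg_left (le_add_of_nonneg_right (hMMDnonneg _ _)) hlam).trans hle

/-- If `T lam` minimizes the relaxed objective `OT_lam` for each
`lam > 0`, and the constrained problem `OT` is attained (by `T₀`) with finite
value `OTval`, then `limsup_{lam→∞} lam·d_MMD(T lam) ≤ OTval`; in particular
`MMD((T lam)_♯ p, q) → 0` as `lam → ∞`. -/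
theorem penalty_limsup_le_OT {d : ℕ} (Ω : Set (EuclideanSpace ℝ (Fin d)))
    (hΩ : IsCompact Ω)
    (c : EuclideanSpace ℝ (Fin d) → EuclideanSpace ℝ (Fin d) → ℝ)
    (hcnonneg : ∀ x y, 0 ≤ c x y)
    (p q : Measure (EuclideanSpace ℝ (Fin d)))
    [IsProbabilityMeasure p] [IsProbabilityMeasure q]
    (hpΩ : p Ωᶜ = 0) (hqΩ : q Ωᶜ = 0)
    (MMD : Measure (EuclideanSpace ℝ (Fin d)) → Measure (EuclideanSpace ℝ (Fin d)) → ℝ)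
    (hMMDnonneg : ∀ μ ν, 0 ≤ MMD μ ν)
    (hMMDrefl : ∀ μ ν, μ = ν → MMD μ ν = 0)
    (T S : ℝ → EuclideanSpace ℝ (Fin d) → EuclideanSpace ℝ (Fin d))
    (hTdiffeo : ∀ lam > (0:ℝ), IsDiffeoOn Ω (T lam) (S lam))
    (hTmin : ∀ lam > (0:ℝ), ∀ T' S', IsDiffeoOn Ω T' S' →
      (∫ x, c x (T lam x) ∂p) + (∫ z, c (S lam z) z ∂q)
          + lam * (MMD (p.map (T lam)) q + MMD p (q.map (S lam))) ≤
        (∫ x, c x (T' x) ∂p) + (∫ z, c (S' z) z ∂q)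
          + lam * (MMD (p.map T') q + MMD p (q.map S')))
    (T₀ S₀ : EuclideanSpace ℝ (Fin d) → EuclideanSpace ℝ (Fin d))
    (hT₀ : IsDiffeoOn Ω T₀ S₀) (hT₀push : p.map T₀ = q)
    (OTval : ℝ)
    (hOTval : OTval = (∫ x, c x (T₀ x) ∂p) + (∫ z, c (S₀ z) z ∂q))
    (hOTmin : ∀ T' S', IsDiffeoOn Ω T' S' → p.map T' = q →
      OTval ≤ (∫ x, c x (T' x) ∂p) + (∫ z, c (S' z) z ∂q)) :
    limsup (fun lam : ℝ =>
        lam * (MMD (p.map (T lam)) q + MMD p (q.map (S lam)))) atTop ≤ OTval ∧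
      Tendsto (fun lam : ℝ => MMD (p.map (T lam)) q) atTop (nhds 0) :=
  penalty_limsup_le_OT_general Ω c hcnonneg p q hpΩ MMD hMMDnonneg hMMDrefl T S hTmin T₀ S₀ hT₀
    hT₀push OTval hOTval
end
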